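/- Let q1, q2, q3 be nonzero complex numbers with q1·q2·q3 = 1, let 𝔮 be nonzero with 𝔮² = q3, fix finite subsets Λ^1,…,Λ^n and Ω^1,…,Ω^m of ℤ³, nonzero complex numbers K_1,…,K_n, K′_1,…,K′_m, v_1,…,v_n, w_1,…,w_m, and an index 1 ≤ i ≤ m. Define G := ( ∏_{1≤j<l≤n} 𝐄^{K_j,K_l}_{Λ^j,Λ^l}(v_l/v_j) · ∏_{1≤j<l≤m} 𝐄^{K′_j,K′_l}_{Ω^j,Ω^l}(𝔮²·w_l/w_j) ) / ( ∏_{s=1}^m ∏_{l=1}^n 𝐄^{K′_s,K_l}_{Ω^s,Λ^l}(𝔮·v_l/w_s) ), and let G′ be the same expression with w_i replaced by 𝔮^{−2}·w_i. Assume every series occurring in the 𝐄-factors of G and G′ and in the R̃-factors below converges absolutely. Then G′ = 𝒜_i^* · G, where 𝒜_i^* := ∏_{k=i+1}^m R̃^{K′_i,K′_k}_{Ω^i,Ω^k}(𝔮^{−2}·w_i/w_k) · ∏_{l=1}^n R̃^{K′_i,K_l}_{Ω^i,Λ^l}(𝔮^{−1}·w_i/v_l)^{−1} · ∏_{s=1}^{i−1}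 R̃^{K′_s,K′_i}_{Ω^s,Ω^i}(w_s/w_i)^{−1}. (This is the series part of the MacMahon KZ equation in the dual variable w_i; the zero-mode theta factors contribute the remaining factor (K′_i)^{−|Ω^i|}.) -/

import Mathlib

open Complex

/-- `κ_r = (q1^r - 1)(q2^r - 1)(q3^r - 1)`. -/
noncomputable def kap (q1 q2 q3 : ℂ) (r : ℕ) : ℂ :=
  (q1 ^ r - 1) * (q2 ^ r - 1) * (q3 ^ r - 1)

/-- The weight `x_b = q1^i q2^j q3^k` of a box `b = (i,j,k) ∈ ℤ³`. -/
noncomputable def boxWt (q1 q2 q3 : ℂ) (b : ℤ × ℤ × ℤ) : ℂ :=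
  q1 ^ b.1 * q2 ^ b.2.1 * q3 ^ b.2.2

/-- The summand (at index `r ≥ 1`, here `r+1`) of the series defining the two-point function
`𝐄^{K,K′}_{Π,Λ}(y)` of MacMahon intertwiners. -/
noncomputable def eSummand (q1 q2 q3 K K' : ℂ) (Pi' Λ : Finset (ℤ × ℤ × ℤ)) (y : ℂ)
    (r : ℕ) : ℂ :=
  -(((1 - q1 ^ (r + 1)) * (1 - q2 ^ (r + 1)) / ((r : ℂ) + 1)) * y ^ (r + 1) *
      ((∑ b ∈ Λ, boxWt q1 q2 q3 b ^ (r + 1)) + (1 - K' ^ (r + 1)) / kap q1 q2 q3 (r + 1)) *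
      ((∑ b ∈ Pi', ((boxWt q1 q2 q3 b)⁻¹) ^ (r + 1)) -
        (1 - (K⁻¹) ^ (r + 1)) / kap q1 q2 q3 (r + 1)))

/-- `𝐄^{K,K′}_{Π,Λ}(y)`. -/
noncomputable def eFun (q1 q2 q3 K K' : ℂ) (Pi' Λ : Finset (ℤ × ℤ × ℤ)) (y : ℂ) : ℂ :=
  Complex.exp (∑' r : ℕ, eSummand q1 q2 q3 K K' Pi' Λ y r)

/-- The summand (at index `r ≥ 1`, here `r+1`) of the series defining the MacMahon R-matrix
eigenvalue `R̃^{K,K′}_{Π,Λ}(z)`. -/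
noncomputable def rtSummand (q1 q2 q3 K K' : ℂ) (Pi' Λ : Finset (ℤ × ℤ × ℤ)) (z : ℂ)
    (r : ℕ) : ℂ :=
  -((kap q1 q2 q3 (r + 1) / ((r : ℂ) + 1)) * (z⁻¹) ^ (r + 1) *
      ((∑ b ∈ Λ, boxWt q1 q2 q3 b ^ (r + 1)) + (1 - K' ^ (r + 1)) / kap q1 q2 q3 (r + 1)) *
      ((∑ b ∈ Pi', ((boxWt q1 q2 q3 b)⁻¹) ^ (r + 1)) -
        (1 - (K⁻¹) ^ (r + 1)) / kap q1 q2 q3 (r + 1)))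

/-- `R̃^{K,K′}_{Π,Λ}(z)`. -/
noncomputable def rTil (q1 q2 q3 K K' : ℂ) (Pi' Λ : Finset (ℤ × ℤ × ℤ)) (z : ℂ) : ℂ :=
  Complex.exp (∑' r : ℕ, rtSummand q1 q2 q3 K K' Pi' Λ z r)

/-- The factorized correlation function of MacMahon intertwiners:
`G = (∏_{j<l} 𝐄^{K_j,K_l}_{Λ^j,Λ^l}(v_l/v_j) · ∏_{j<l} 𝐄^{K′_j,K′_l}_{Ω^j,Ω^l}(𝔮² w_l/w_j)) /
(∏_s ∏_l 𝐄^{K′_s,K_l}_{Ω^s,Λ^l}(𝔮 v_l/w_s))`. -/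
noncomputable def corrGM (q1 q2 q3 qq : ℂ) {n m : ℕ}
    (K : Fin n → ℂ) (K' : Fin m → ℂ)
    (Λ : Fin n → Finset (ℤ × ℤ × ℤ)) (Ω : Fin m → Finset (ℤ × ℤ × ℤ))
    (v : Fin n → ℂ) (w : Fin m → ℂ) : ℂ :=
  ((∏ p ∈ Finset.univ.filter (fun p : Fin n × Fin n => p.1 < p.2),
      eFun q1 q2 q3 (K p.1) (K p.2) (Λ p.1) (Λ p.2) (v p.2 / v p.1)) *
    (∏ p ∈ Finset.univ.filter (fun p : Fin m × Fin m => p.1 < p.2),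
      eFun q1 q2 q3 (K' p.1) (K' p.2) (Ω p.1) (Ω p.2) (qq ^ 2 * w p.2 / w p.1))) /
  (∏ s : Fin m, ∏ l : Fin n,
      eFun q1 q2 q3 (K' s) (K l) (Ω s) (Λ l) (qq * v l / w s))

lemma eS_shift (q1 q2 q3 K K' : ℂ) (P L : Finset (ℤ × ℤ × ℤ)) (y : ℂ) (r : ℕ) :
    eSummand q1 q2 q3 K K' P L (q3 * y) r
      = eSummand q1 q2 q3 K K' P L y r + rtSummand q1 q2 q3 K K' P L y⁻¹ r := by
  have hr : ((r : ℂ) + 1) ≠ 0 := Nat.cast_add_one_ne_zero r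
  unfold eSummand rtSummand
  rw [inv_inv, mul_pow]
  set a := (∑ b ∈ L, boxWt q1 q2 q3 b ^ (r + 1)) + (1 - K' ^ (r + 1)) / kap q1 q2 q3 (r + 1) with ha
  set b := (∑ b ∈ P, ((boxWt q1 q2 q3 b)⁻¹) ^ (r + 1)) - (1 - (K⁻¹) ^ (r + 1)) / kap q1 q2 q3 (r + 1) with hb
  simp only [kap]
  field_simp
  ring

lemma eFun_shift (q1 q2 q3 K K' : ℂ) (P L : Finset (ℤ × ℤ × ℤ)) (y : ℂ)
    (h1 : Summable fun r : ℕ => ‖eSummand q1 q2 q3 K K' P L y r‖)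
    (h2 : Summable fun r : ℕ => ‖eSummand q1 q2 q3 K K' P L (q3 * y) r‖) :
    eFun q1 q2 q3 K K' P L (q3 * y)
      = eFun q1 q2 q3 K K' P L y * rTil q1 q2 q3 K K' P L y⁻¹ := by
  unfold eFun rTil
  rw [← Complex.exp_add]
  congr 1
  have h1' := h1.of_norm
  have h2' := h2.of_norm
  have hpt : (fun r : ℕ => rtSummand q1 q2 q3 K K' P L y⁻¹ r)
      = fun r => eSummand q1 q2 q3 K K' P L (q3 * y) r - eSummand q1 q2 q3 K K' P L y r := by
    funext r; rw [eS_shift]; ring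
  rw [hpt, Summable.tsum_sub h2' h1']
  ring

lemma eFun_ne_zero (q1 q2 q3 K K' : ℂ) (P L : Finset (ℤ × ℤ × ℤ)) (y : ℂ) :
    eFun q1 q2 q3 K K' P L y ≠ 0 := Complex.exp_ne_zero _

lemma rTil_ne_zero (q1 q2 q3 K K' : ℂ) (P L : Finset (ℤ × ℤ × ℤ)) (z : ℂ) :
    rTil q1 q2 q3 K K' P L z ≠ 0 := Complex.exp_ne_zero _

/-- the series part of the MacMahon KZ equation in the dual variable `w_i`:
the factorized correlation function of MacMahon intertwiners solves the generalized quantum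
KZ equation with shift parameter `p = 𝔮^{-2}`. -/
theorem macmahon_qKZ_solution_dual
    (q1 q2 q3 : ℂ) (hq1 : q1 ≠ 0) (hq2 : q2 ≠ 0) (hq3 : q3 ≠ 0)
    (hq : q1 * q2 * q3 = 1)
    (qq : ℂ) (hqq0 : qq ≠ 0) (hqq : qq ^ 2 = q3)
    {n m : ℕ}
    (K : Fin n → ℂ) (K' : Fin m → ℂ) (hK : ∀ i, K i ≠ 0) (hK' : ∀ j, K' j ≠ 0)
    (Λ : Fin n → Finset (ℤ × ℤ × ℤ)) (Ω : Fin m → Finset (ℤ × ℤ × ℤ))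
    (v : Fin n → ℂ) (w : Fin m → ℂ) (hv : ∀ i, v i ≠ 0) (hw : ∀ j, w j ≠ 0)
    (i : Fin m)
    (w' : Fin m → ℂ) (hw' : w' = Function.update w i (qq ^ (-2 : ℤ) * w i))
    (hE1 : ∀ j l : Fin n, j < l → Summable (fun r : ℕ =>
      ‖eSummand q1 q2 q3 (K j) (K l) (Λ j) (Λ l) (v l / v j) r‖))
    (hE2 : ∀ j l : Fin m, j < l → Summable (fun r : ℕ =>
      ‖eSummand q1 q2 q3 (K' j) (K' l) (Ω j) (Ω l) (qq ^ 2 * w l / w j) r‖))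
    (hE2' : ∀ j l : Fin m, j < l → Summable (fun r : ℕ =>
      ‖eSummand q1 q2 q3 (K' j) (K' l) (Ω j) (Ω l) (qq ^ 2 * w' l / w' j) r‖))
    (hE3 : ∀ s : Fin m, ∀ l : Fin n, Summable (fun r : ℕ =>
      ‖eSummand q1 q2 q3 (K' s) (K l) (Ω s) (Λ l) (qq * v l / w s) r‖))
    (hE3' : ∀ s : Fin m, ∀ l : Fin n, Summable (fun r : ℕ =>
      ‖eSummand q1 q2 q3 (K' s) (K l) (Ω s) (Λ l) (qq * v l / w' s) r‖))
    (hR1 : ∀ k : Fin m, i < k → Summable (fun r : ℕ =>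
      ‖rtSummand q1 q2 q3 (K' i) (K' k) (Ω i) (Ω k) (qq ^ (-2 : ℤ) * w i / w k) r‖))
    (hR2 : ∀ l : Fin n, Summable (fun r : ℕ =>
      ‖rtSummand q1 q2 q3 (K' i) (K l) (Ω i) (Λ l) (qq ^ (-1 : ℤ) * w i / v l) r‖))
    (hR3 : ∀ s : Fin m, s < i → Summable (fun r : ℕ =>
      ‖rtSummand q1 q2 q3 (K' s) (K' i) (Ω s) (Ω i) (w s / w i) r‖)) :
    corrGM q1 q2 q3 qq K K' Λ Ω v w'
      = ((∏ k ∈ Finset.univ.filter (fun k : Fin m => i < k),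
            rTil q1 q2 q3 (K' i) (K' k) (Ω i) (Ω k) (qq ^ (-2 : ℤ) * w i / w k)) *
          (∏ l : Fin n,
            (rTil q1 q2 q3 (K' i) (K l) (Ω i) (Λ l) (qq ^ (-1 : ℤ) * w i / v l))⁻¹) *
          (∏ s ∈ Finset.univ.filter (fun s : Fin m => s < i),
            (rTil q1 q2 q3 (K' s) (K' i) (Ω s) (Ω i) (w s / w i))⁻¹)) *
        corrGM q1 q2 q3 qq K K' Λ Ω v w := by
  classical
  have hq3e : qq ^ (-2:ℤ) = q3⁻¹ := by simp only [zpow_neg, ← hqq]; norm_cast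
  have hwi : w' i = q3⁻¹ * w i := by rw [hw', Function.update_self, hq3e]
  have hwj : ∀ j : Fin m, j ≠ i → w' j = w j := fun j hj => by
    rw [hw', Function.update_of_ne hj]
  have harg1 : ∀ x : ℂ, qq * x / w' i = q3 * (qq * x / w i) := fun x => by
    rw [hwi, div_eq_mul_inv, div_eq_mul_inv, mul_inv, inv_inv]; ring
  have harg2 : ∀ x : ℂ, qq ^ 2 * x / w' i = q3 * (qq ^ 2 * x / w i) := fun x => by
    rw [hwi, div_eq_mul_inv, div_eq_mul_inv, mul_inv, inv_inv]; ring
  have hargnum : ∀ x : ℂ, qq ^ 2 * w' i / x = w i / x := fun x => by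
    rw [hwi, hqq, ← mul_assoc, mul_inv_cancel₀ hq3, one_mul]
  have hargold : ∀ x : ℂ, qq ^ 2 * w i / x = q3 * (w i / x) := fun x => by
    rw [hqq]; ring
  have hz2 : qq ^ (-2:ℤ) = (qq ^ 2)⁻¹ := by rw [hq3e, hqq]
  have hinv2 : ∀ x : ℂ, (qq ^ 2 * x / w i)⁻¹ = qq ^ (-2:ℤ) * w i / x := fun x => by
    rw [inv_div, hz2, div_eq_mul_inv, div_eq_mul_inv, mul_inv]; ring
  have hinv1 : ∀ x : ℂ, (qq * x / w i)⁻¹ = qq ^ (-1:ℤ) * w i / x := fun x => by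
    rw [inv_div, zpow_neg_one, div_eq_mul_inv, div_eq_mul_inv, mul_inv]; ring
  -- factor lemmas
  have hfacA : ∀ k : Fin m, i < k →
      eFun q1 q2 q3 (K' i) (K' k) (Ω i) (Ω k) (qq ^ 2 * w' k / w' i)
        = eFun q1 q2 q3 (K' i) (K' k) (Ω i) (Ω k) (qq ^ 2 * w k / w i)
          * rTil q1 q2 q3 (K' i) (K' k) (Ω i) (Ω k) (qq ^ (-2:ℤ) * w i / w k) := by
    intro k hk
    have hk' : k ≠ i := ne_of_gt hk
    have h2 := hE2' i k hk
    rw [hwj k hk', harg2 (w k)] at h2 ⊢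
    rw [eFun_shift q1 q2 q3 (K' i) (K' k) (Ω i) (Ω k) _ (hE2 i k hk) h2, hinv2]
  have hfacC : ∀ s : Fin m, s < i →
      eFun q1 q2 q3 (K' s) (K' i) (Ω s) (Ω i) (qq ^ 2 * w' i / w' s)
        = eFun q1 q2 q3 (K' s) (K' i) (Ω s) (Ω i) (qq ^ 2 * w i / w s)
          * (rTil q1 q2 q3 (K' s) (K' i) (Ω s) (Ω i) (w s / w i))⁻¹ := by
    intro s hs
    have hs' : s ≠ i := ne_of_lt hs
    have h1 := hE2' s i hs
    rw [hwj s hs', hargnum (w s)] at h1 ⊢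
    have h2 := hE2 s i hs
    rw [hargold (w s)] at h2
    have hsh := eFun_shift q1 q2 q3 (K' s) (K' i) (Ω s) (Ω i) (w i / w s) h1 h2
    rw [inv_div] at hsh
    rw [hargold (w s), hsh, mul_assoc,
      mul_inv_cancel₀ (rTil_ne_zero q1 q2 q3 (K' s) (K' i) (Ω s) (Ω i) (w s / w i)), mul_one]
  have hfacB : ∀ l : Fin n,
      eFun q1 q2 q3 (K' i) (K l) (Ω i) (Λ l) (qq * v l / w' i)
        = eFun q1 q2 q3 (K' i) (K l) (Ω i) (Λ l) (qq * v l / w i)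
          * rTil q1 q2 q3 (K' i) (K l) (Ω i) (Λ l) (qq ^ (-1:ℤ) * w i / v l) := by
    intro l
    have h2 := hE3' i l
    rw [harg1 (v l)] at h2 ⊢
    rw [eFun_shift q1 q2 q3 (K' i) (K l) (Ω i) (Λ l) _ (hE3 i l) h2, hinv1]
  -- denominator
  have hDen : (∏ s : Fin m, ∏ l : Fin n,
        eFun q1 q2 q3 (K' s) (K l) (Ω s) (Λ l) (qq * v l / w' s))
      = (∏ s : Fin m, ∏ l : Fin n,
          eFun q1 q2 q3 (K' s) (K l) (Ω s) (Λ l) (qq * v l / w s))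
        * ∏ l : Fin n, rTil q1 q2 q3 (K' i) (K l) (Ω i) (Λ l) (qq ^ (-1:ℤ) * w i / v l) := by
    rw [← Finset.prod_erase_mul Finset.univ
        (fun s => ∏ l : Fin n, eFun q1 q2 q3 (K' s) (K l) (Ω s) (Λ l) (qq * v l / w' s))
        (Finset.mem_univ i),
      ← Finset.prod_erase_mul Finset.univ
        (fun s => ∏ l : Fin n, eFun q1 q2 q3 (K' s) (K l) (Ω s) (Λ l) (qq * v l / w s))
        (Finset.mem_univ i)]
    have h1 : ∏ s ∈ Finset.univ.erase i,
        (∏ l : Fin n, eFun q1 q2 q3 (K' s) (K l) (Ω s) (Λ l) (qq * v l / w' s))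
        = ∏ s ∈ Finset.univ.erase i,
        (∏ l : Fin n, eFun q1 q2 q3 (K' s) (K l) (Ω s) (Λ l) (qq * v l / w s)) :=
      Finset.prod_congr rfl fun s hs => by
        rw [hwj s (Finset.ne_of_mem_erase hs)]
    have h2 : (∏ l : Fin n, eFun q1 q2 q3 (K' i) (K l) (Ω i) (Λ l) (qq * v l / w' i))
        = (∏ l : Fin n, eFun q1 q2 q3 (K' i) (K l) (Ω i) (Λ l) (qq * v l / w i))
          * ∏ l : Fin n, rTil q1 q2 q3 (K' i) (K l) (Ω i) (Λ l) (qq ^ (-1:ℤ) * w i / v l) := by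
      rw [Finset.prod_congr rfl fun l (_ : l ∈ Finset.univ) => hfacB l, Finset.prod_mul_distrib]
    rw [h1, h2]; ring
  -- numerator pair product
  have hNum : (∏ p ∈ Finset.univ.filter (fun p : Fin m × Fin m => p.1 < p.2),
        eFun q1 q2 q3 (K' p.1) (K' p.2) (Ω p.1) (Ω p.2) (qq ^ 2 * w' p.2 / w' p.1))
      = (∏ p ∈ Finset.univ.filter (fun p : Fin m × Fin m => p.1 < p.2),
          eFun q1 q2 q3 (K' p.1) (K' p.2) (Ω p.1) (Ω p.2) (qq ^ 2 * w p.2 / w p.1))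
        * ((∏ k ∈ Finset.univ.filter (fun k : Fin m => i < k),
            rTil q1 q2 q3 (K' i) (K' k) (Ω i) (Ω k) (qq ^ (-2:ℤ) * w i / w k)) *
          (∏ s ∈ Finset.univ.filter (fun s : Fin m => s < i),
            (rTil q1 q2 q3 (K' s) (K' i) (Ω s) (Ω i) (w s / w i))⁻¹)) := by
    set S2 : Finset (Fin m × Fin m) := Finset.univ.filter (fun p : Fin m × Fin m => p.1 < p.2)
      with hS2
    rw [← Finset.prod_filter_mul_prod_filter_not S2 (fun p => p.1 = i)
        (fun p => eFun q1 q2 q3 (K' p.1) (K' p.2) (Ω p.1) (Ω p.2) (qq ^ 2 * w' p.2 / w' p.1)),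
      ← Finset.prod_filter_mul_prod_filter_not S2 (fun p => p.1 = i)
        (fun p => eFun q1 q2 q3 (K' p.1) (K' p.2) (Ω p.1) (Ω p.2) (qq ^ 2 * w p.2 / w p.1)),
      ← Finset.prod_filter_mul_prod_filter_not (S2.filter (fun p => ¬ p.1 = i))
        (fun p => p.2 = i)
        (fun p => eFun q1 q2 q3 (K' p.1) (K' p.2) (Ω p.1) (Ω p.2) (qq ^ 2 * w' p.2 / w' p.1)),
      ← Finset.prod_filter_mul_prod_filter_not (S2.filter (fun p => ¬ p.1 = i))
        (fun p => p.2 = i)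
        (fun p => eFun q1 q2 q3 (K' p.1) (K' p.2) (Ω p.1) (Ω p.2) (qq ^ 2 * w p.2 / w p.1))]
    have hPa : (∏ p ∈ S2.filter (fun p => p.1 = i),
          eFun q1 q2 q3 (K' p.1) (K' p.2) (Ω p.1) (Ω p.2) (qq ^ 2 * w' p.2 / w' p.1))
        = (∏ p ∈ S2.filter (fun p => p.1 = i),
            eFun q1 q2 q3 (K' p.1) (K' p.2) (Ω p.1) (Ω p.2) (qq ^ 2 * w p.2 / w p.1))
          * ∏ k ∈ Finset.univ.filter (fun k : Fin m => i < k),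
            rTil q1 q2 q3 (K' i) (K' k) (Ω i) (Ω k) (qq ^ (-2:ℤ) * w i / w k) := by
      have step1 : ∀ p ∈ S2.filter (fun p => p.1 = i),
          eFun q1 q2 q3 (K' p.1) (K' p.2) (Ω p.1) (Ω p.2) (qq ^ 2 * w' p.2 / w' p.1)
            = eFun q1 q2 q3 (K' p.1) (K' p.2) (Ω p.1) (Ω p.2) (qq ^ 2 * w p.2 / w p.1)
              * rTil q1 q2 q3 (K' i) (K' p.2) (Ω i) (Ω p.2) (qq ^ (-2:ℤ) * w i / w p.2) := by
        intro p hp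
        simp only [hS2, Finset.mem_filter, Finset.mem_univ, true_and] at hp
        obtain ⟨hlt, h1⟩ := hp
        rw [h1]
        exact hfacA p.2 (h1 ▸ hlt)
      rw [Finset.prod_congr rfl step1, Finset.prod_mul_distrib]
      congr 1
      refine Finset.prod_nbij' (fun p => p.2) (fun k => (i, k)) ?_ ?_ ?_ ?_ ?_
      · intro p hp
        simp only [hS2, Finset.mem_filter, Finset.mem_univ, true_and] at hp ⊢
        exact hp.2 ▸ hp.1
      · intro k hk
        simp only [hS2, Finset.mem_filter, Finset.mem_univ, true_and] at hk ⊢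
        exact ⟨hk, trivial⟩
      · intro p hp
        simp only [hS2, Finset.mem_filter, Finset.mem_univ, true_and] at hp
        exact Prod.ext hp.2.symm rfl
      · intro k _; rfl
      · intro p _; rfl
    have hPb : (∏ p ∈ (S2.filter (fun p => ¬ p.1 = i)).filter (fun p => p.2 = i),
          eFun q1 q2 q3 (K' p.1) (K' p.2) (Ω p.1) (Ω p.2) (qq ^ 2 * w' p.2 / w' p.1))
        = (∏ p ∈ (S2.filter (fun p => ¬ p.1 = i)).filter (fun p => p.2 = i),
            eFun q1 q2 q3 (K' p.1) (K' p.2) (Ω p.1) (Ω p.2) (qq ^ 2 * w p.2 / w p.1))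
          * ∏ s ∈ Finset.univ.filter (fun s : Fin m => s < i),
            (rTil q1 q2 q3 (K' s) (K' i) (Ω s) (Ω i) (w s / w i))⁻¹ := by
      have step1 : ∀ p ∈ (S2.filter (fun p => ¬ p.1 = i)).filter (fun p => p.2 = i),
          eFun q1 q2 q3 (K' p.1) (K' p.2) (Ω p.1) (Ω p.2) (qq ^ 2 * w' p.2 / w' p.1)
            = eFun q1 q2 q3 (K' p.1) (K' p.2) (Ω p.1) (Ω p.2) (qq ^ 2 * w p.2 / w p.1)
              * (rTil q1 q2 q3 (K' p.1) (K' i) (Ω p.1) (Ω i) (w p.1 / w i))⁻¹ := by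
        intro p hp
        simp only [hS2, Finset.mem_filter, Finset.mem_univ, true_and] at hp
        obtain ⟨⟨hlt, _⟩, h2⟩ := hp
        rw [h2]
        exact hfacC p.1 (h2 ▸ hlt)
      rw [Finset.prod_congr rfl step1, Finset.prod_mul_distrib]
      congr 1
      refine Finset.prod_nbij' (fun p => p.1) (fun s => (s, i)) ?_ ?_ ?_ ?_ ?_
      · intro p hp
        simp only [hS2, Finset.mem_filter, Finset.mem_univ, true_and] at hp ⊢
        exact hp.2 ▸ hp.1.1
      · intro s hs
        simp only [hS2, Finset.mem_filter, Finset.mem_univ, true_and] at hs ⊢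
        exact ⟨⟨hs, ne_of_lt hs⟩, trivial⟩
      · intro p hp
        simp only [hS2, Finset.mem_filter, Finset.mem_univ, true_and] at hp
        exact Prod.ext rfl hp.2.symm
      · intro s _; rfl
      · intro p _; rfl
    have hPc : (∏ p ∈ (S2.filter (fun p => ¬ p.1 = i)).filter (fun p => ¬ p.2 = i),
          eFun q1 q2 q3 (K' p.1) (K' p.2) (Ω p.1) (Ω p.2) (qq ^ 2 * w' p.2 / w' p.1))
        = ∏ p ∈ (S2.filter (fun p => ¬ p.1 = i)).filter (fun p => ¬ p.2 = i),
            eFun q1 q2 q3 (K' p.1) (K' p.2) (Ω p.1) (Ω p.2) (qq ^ 2 * w p.2 / w p.1) := by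
      refine Finset.prod_congr rfl fun p hp => ?_
      simp only [hS2, Finset.mem_filter, Finset.mem_univ, true_and] at hp
      rw [hwj p.1 hp.1.2, hwj p.2 hp.2]
    rw [hPa, hPb, hPc]
    ring
  -- assemble
  have hBne : (∏ l : Fin n,
      rTil q1 q2 q3 (K' i) (K l) (Ω i) (Λ l) (qq ^ (-1:ℤ) * w i / v l)) ≠ 0 :=
    Finset.prod_ne_zero_iff.mpr fun l _ => rTil_ne_zero _ _ _ _ _ _ _ _
  have hP3ne : (∏ s : Fin m, ∏ l : Fin n,
      eFun q1 q2 q3 (K' s) (K l) (Ω s) (Λ l) (qq * v l / w s)) ≠ 0 :=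
    Finset.prod_ne_zero_iff.mpr fun s _ =>
      Finset.prod_ne_zero_iff.mpr fun l _ => eFun_ne_zero _ _ _ _ _ _ _ _
  have hBdist : (∏ l : Fin n,
      (rTil q1 q2 q3 (K' i) (K l) (Ω i) (Λ l) (qq ^ (-1:ℤ) * w i / v l))⁻¹)
      = (∏ l : Fin n,
        rTil q1 q2 q3 (K' i) (K l) (Ω i) (Λ l) (qq ^ (-1:ℤ) * w i / v l))⁻¹ :=
    Finset.prod_inv_distrib _
  simp only [corrGM]
  rw [hNum, hDen, hBdist]
  have final : ∀ P1 P2 P3 A B C : ℂ, P3 ≠ 0 → B ≠ 0 →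
      (P1 * (P2 * (A * C))) / (P3 * B) = A * B⁻¹ * C * ((P1 * P2) / P3) := by
    intro P1 P2 P3 A B C h3 hB
    field_simp
  exact final _ _ _ _ _ _ hP3ne hBne
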